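/- arXiv:2103.05813 — 2 statements merged into one kernel-verified Lean document; each statement's English description precedes it below -/
import Mathlib

section
/- There exists δ₀ > 0 such that for every integer k ≥ 0 with δ = 2^{−k} ≤ δ₀ and all l, l' ∈ I_k with |l − l'| > 10³, the Minkowski difference set Γ_{k,l} − Γ_{k,l'} = {a − b : a ∈ Γ_{k,l}, b ∈ Γ_{k,l'}} is contained in the closed disk of radius 150·δ^{1/2} centered at w(l,l') = e^{2πil·δ^{1/2}} − e^{2πil'·δ^{1/2}}. Moreover Γ_{k,l} − Γ_{k,l'} is contained in a rectangle centered at w(l,l') with half-side 100·δ^{1/2} in the direction of w(l,l') and half-side 90·|l−l'|·δ in the direction of i·w(l,l'). -/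
open scoped Pointwise Real

/-- The sectorial arc `Γ_{k,l}`: points `r e^{2πiθ}` with `|θ - l δ^{1/2}| < δ^{1/2}` and
`1 - (5/8)δ ≤ r ≤ 1 - (1/8)δ`, where `δ = 2^{-k}`. -/
noncomputable def sectArc (k : ℕ) (l : ℤ) : Set ℂ :=
  {z : ℂ | ∃ r θ : ℝ,
    |θ - l * Real.sqrt ((2:ℝ) ^ (-(k:ℤ)))| < Real.sqrt ((2:ℝ) ^ (-(k:ℤ))) ∧
    1 - (5/8) * (2:ℝ) ^ (-(k:ℤ)) ≤ r ∧ r ≤ 1 - (1/8) * (2:ℝ) ^ (-(k:ℤ)) ∧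
    z = r * Complex.exp (2 * π * θ * Complex.I)}

/-- The open cone `Q_a = {(x,y) : x > 0, |y| < |x|}` in `ℝ² ≅ ℂ`. -/
def coneQa : Set ℂ := {z : ℂ | 0 < z.re ∧ |z.im| < |z.re|}

/-- The index set `I_k` of those `l` for which `Γ_{k,l}` lies in the cone `Q_a`. -/
noncomputable def sectIdx (k : ℕ) : Set ℤ := {l : ℤ | sectArc k l ⊆ coneQa}

/-- The center `w(l,l') = e^{2πi l δ^{1/2}} - e^{2πi l' δ^{1/2}}` of the difference set
`Γ_{k,l} - Γ_{k,l'}`, where `δ = 2^{-k}`. -/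
noncomputable def sectCenter (k : ℕ) (l l' : ℤ) : ℂ :=
  Complex.exp (2 * π * (l * Real.sqrt ((2:ℝ) ^ (-(k:ℤ)))) * Complex.I) -
  Complex.exp (2 * π * (l' * Real.sqrt ((2:ℝ) ^ (-(k:ℤ)))) * Complex.I)

/-!
Write a point of `Γ_{k,l}` as `r e^{iφ}` with `|r - 1| ≤ 5δ/8` and `|φ - 2πl δ^{1/2}| ≤ 2π δ^{1/2}`.
The disk bound is then the triangle inequality together with `|e^{ix} - e^{iy}| ≤ |x - y|`.
For the rectangle, `w = e^{iα} - e^{iα'} = 2 sin((α - α')/2) · i e^{iβ}` with `β = (α + α')/2`, so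
the component of `z - w` along `i w` is, up to sign, `Re (z e^{-iβ}) = r cos (φ - β) - r' cos (φ' - β)`.
The angles `φ - β` and `φ' - β` are nearly opposite (their sum is `O(δ^{1/2})`) and differ by
`O(|l - l'| δ^{1/2})`, so `cos x - cos y = -2 sin ((x + y)/2) sin ((x - y)/2)` makes this
`O(|l - l'| δ)`.
-/

open Complex ComplexConjugate

lemma norm_exp_mul_I_sub_exp_mul_I_le (x y : ℝ) :
    ‖exp (x * I) - exp (y * I)‖ ≤ |x - y| := by
  have h : exp (x * I) - exp (y * I) = exp (y * I) * (exp (I * ↑(x - y)) - 1) := by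
    rw [mul_sub, ← exp_add]; push_cast; ring_nf
  rw [h, norm_mul, norm_exp_ofReal_mul_I, one_mul]
  exact Real.norm_exp_I_mul_ofReal_sub_one_le

lemma norm_ofReal_mul_exp_sub_exp_le (r x y : ℝ) :
    ‖r * exp (x * I) - exp (y * I)‖ ≤ |r - 1| + |x - y| := calc
  _ = ‖((r - 1 : ℝ) : ℂ) * exp (x * I) + (exp (x * I) - exp (y * I))‖ := by push_cast; ring_nf
  _ ≤ _ := by
    refine (norm_add_le _ _).trans (add_le_add ?_ (norm_exp_mul_I_sub_exp_mul_I_le x y))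
    rw [norm_mul, norm_exp_ofReal_mul_I, mul_one, norm_real, Real.norm_eq_abs]

lemma norm_sub_sub_exp_sub_exp_le (r r' φ φ' α α' : ℝ) :
    ‖r * exp (φ * I) - r' * exp (φ' * I) - (exp (α * I) - exp (α' * I))‖ ≤
      |r - 1| + |φ - α| + (|r' - 1| + |φ' - α'|) := calc
  _ = ‖(r * exp (φ * I) - exp (α * I)) - (r' * exp (φ' * I) - exp (α' * I))‖ := by ring_nf
  _ ≤ _ := (norm_sub_le _ _).trans (add_le_add (norm_ofReal_mul_exp_sub_exp_le r φ α)
      (norm_ofReal_mul_exp_sub_exp_le r' φ' α'))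

lemma exp_mul_I_sub_exp_mul_I (α α' : ℝ) :
    exp (α * I) - exp (α' * I) =
      (2 * Real.sin ((α - α') / 2) : ℝ) * I * exp (((α + α') / 2 : ℝ) * I) := calc
  _ = exp (((α + α') / 2 : ℝ) * I) *
        (exp (((α - α') / 2 : ℝ) * I) - exp (-((α - α') / 2 : ℝ) * I)) := by
    rw [mul_sub, ← exp_add, ← exp_add]; push_cast; ring_nf
  _ = _ := by
    rw [ofReal_mul, ofReal_sin, Complex.sin]; push_cast; ring_nf; rw [I_sq]; ring

lemma abs_re_mul_conj_div_norm_le (ζ w : ℂ) : |(ζ * conj (w / ‖w‖)).re| ≤ ‖ζ‖ := calc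
  _ ≤ ‖ζ * conj (w / ‖w‖)‖ := abs_re_le_norm _
  _ ≤ ‖ζ‖ := by
    rw [norm_mul, norm_conj, norm_div, norm_real, norm_norm]
    exact mul_le_of_le_one_right (norm_nonneg ζ) (div_self_le_one _)

lemma abs_im_mul_conj_div_norm_le (ζ e : ℂ) (he : ‖e‖ = 1) (c : ℝ) :
    |(ζ * conj (c * I * e / ‖(c : ℂ) * I * e‖)).im| ≤ |(ζ * conj e).re| := by
  rw [norm_mul, norm_mul, he, norm_I, mul_one, mul_one, norm_real, Real.norm_eq_abs]
  rcases eq_or_ne c 0 with rfl | hc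
  · simp
  have : ζ * conj (c * I * e / |c|) = ((c / |c| : ℝ) : ℂ) * (-I) * (ζ * conj e) := by
    rw [map_div₀, map_mul, map_mul, conj_ofReal, conj_ofReal, conj_I]; push_cast; ring
  rw [this, mul_assoc, im_ofReal_mul, abs_mul, abs_div, abs_abs, div_self (abs_ne_zero.2 hc),
    one_mul, neg_mul, neg_im, I_mul_im, abs_neg]

lemma re_sub_mul_conj_exp (r r' φ φ' β c : ℝ) :
    ((r * exp (φ * I) - r' * exp (φ' * I) - c * I * exp (β * I)) * conj (exp (β * I))).re =
      r * Real.cos (φ - β) - r' * Real.cos (φ' - β) := by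
  simp only [sub_mul, sub_re, mul_re, mul_im, conj_re, conj_im, exp_ofReal_mul_I_re,
    exp_ofReal_mul_I_im, ofReal_re, ofReal_im, I_re, I_im]
  rw [Real.cos_sub, Real.cos_sub]
  ring

lemma abs_cos_sub_cos_le_abs_add_mul_abs_sub (x y : ℝ) :
    |Real.cos x - Real.cos y| ≤ |x + y| * |x - y| / 2 := by
  rw [Real.cos_sub_cos, abs_mul, abs_mul, abs_neg, abs_two]
  have h₁ := Real.abs_sin_le_abs (x := (x + y) / 2)
  have h₂ := Real.abs_sin_le_abs (x := (x - y) / 2)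
  rw [abs_div, abs_two] at h₁ h₂
  calc 2 * |Real.sin ((x + y) / 2)| * |Real.sin ((x - y) / 2)|
      ≤ 2 * (|x + y| / 2) * (|x - y| / 2) := by gcongr
    _ = _ := by ring

lemma abs_mul_cos_sub_mul_cos_le (r r' x y : ℝ) :
    |r * Real.cos x - r' * Real.cos y| ≤ |r - 1| + |r' - 1| + |x + y| * |x - y| / 2 := calc
  _ = |(r - 1) * Real.cos x - (r' - 1) * Real.cos y + (Real.cos x - Real.cos y)| := by ring_nf
  _ ≤ |r - 1| * |Real.cos x| + |r' - 1| * |Real.cos y| + |Real.cos x - Real.cos y| := by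
    rw [← abs_mul, ← abs_mul]; exact (abs_add_le _ _).trans (by gcongr; exact abs_sub _ _)
  _ ≤ |r - 1| * 1 + |r' - 1| * 1 + |x + y| * |x - y| / 2 := by
    gcongr
    · exact Real.abs_cos_le_one x
    · exact Real.abs_cos_le_one y
    · exact abs_cos_sub_cos_le_abs_add_mul_abs_sub x y
  _ = _ := by ring

lemma abs_im_sub_mul_conj_div_norm_le (r r' φ φ' α α' : ℝ) {w : ℂ}
    (hw : w = exp (α * I) - exp (α' * I)) :
    |((r * exp (φ * I) - r' * exp (φ' * I) - w) * conj (w / ‖w‖)).im| ≤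
      |r - 1| + |r' - 1| + |φ + φ' - (α + α')| * |φ - φ'| / 2 := by
  rw [exp_mul_I_sub_exp_mul_I] at hw
  subst hw
  refine (abs_im_mul_conj_div_norm_le _ _ (norm_exp_ofReal_mul_I _) _).trans ?_
  rw [re_sub_mul_conj_exp]
  refine (abs_mul_cos_sub_mul_cos_le _ _ _ _).trans (le_of_eq ?_)
  ring_nf

section SectArc

variable {k : ℕ} {l l' : ℤ} {z : ℂ}

lemma exists_polar_of_mem_sectArc (hz : z ∈ sectArc k l) :
    ∃ r φ : ℝ, |r - 1| ≤ 5 / 8 * (2:ℝ) ^ (-(k:ℤ)) ∧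
      |φ - 2 * π * (l * √((2:ℝ) ^ (-(k:ℤ))))| ≤ 2 * π * √((2:ℝ) ^ (-(k:ℤ))) ∧
      z = r * exp (φ * I) := by
  obtain ⟨r, θ, hθ, hr₁, hr₂, rfl⟩ := hz
  have hδ : 0 < (2:ℝ) ^ (-(k:ℤ)) := by positivity
  refine ⟨r, 2 * π * θ, abs_le.2 ⟨by linarith, by linarith⟩, ?_, by push_cast; ring⟩
  rw [← mul_sub, abs_mul, abs_of_pos Real.two_pi_pos]
  gcongr

lemma sectCenter_eq :
    sectCenter k l l' = exp ((2 * π * (l * √((2:ℝ) ^ (-(k:ℤ)))) : ℝ) * I) -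
      exp ((2 * π * (l' * √((2:ℝ) ^ (-(k:ℤ)))) : ℝ) * I) := by
  unfold sectCenter; push_cast; rfl

lemma norm_sub_sectCenter_le (hz : z ∈ sectArc k l - sectArc k l') :
    ‖z - sectCenter k l l'‖ ≤ 14 * √((2:ℝ) ^ (-(k:ℤ))) := by
  obtain ⟨_, hp, _, hp', rfl⟩ := hz
  obtain ⟨r, φ, hr, hφ, rfl⟩ := exists_polar_of_mem_sectArc hp
  obtain ⟨r', φ', hr', hφ', rfl⟩ := exists_polar_of_mem_sectArc hp'
  rw [sectCenter_eq]
  refine (norm_sub_sub_exp_sub_exp_le _ _ _ _ _ _).trans ?_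
  set δ : ℝ := (2:ℝ) ^ (-(k:ℤ))
  have hδ : δ ≤ √δ := by
    refine Real.le_sqrt_of_sq_le (pow_le_of_le_one (by positivity) ?_ two_ne_zero)
    exact zpow_le_one_of_nonpos₀ one_le_two (by simp)
  have hπ : π * √δ ≤ 3.15 * √δ := by gcongr; exact Real.pi_lt_d2.le
  linarith [Real.sqrt_nonneg δ]

lemma abs_im_sub_sectCenter_le (hll' : 2 ≤ |l - l'|)
    (hz : z ∈ sectArc k l - sectArc k l') :
    |((z - sectCenter k l l') * conj (sectCenter k l l' / ‖sectCenter k l l'‖)).im| ≤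
      90 * |l - l'| * (2:ℝ) ^ (-(k:ℤ)) := by
  obtain ⟨_, hp, _, hp', rfl⟩ := hz
  obtain ⟨r, φ, hr, hφ, rfl⟩ := exists_polar_of_mem_sectArc hp
  obtain ⟨r', φ', hr', hφ', rfl⟩ := exists_polar_of_mem_sectArc hp'
  refine (abs_im_sub_mul_conj_div_norm_le r r' φ φ' _ _ sectCenter_eq).trans ?_
  set δ : ℝ := (2:ℝ) ^ (-(k:ℤ))
  set D : ℝ := √δ
  rw [Int.cast_abs, Int.cast_sub]
  have hA : (2 : ℝ) ≤ |(l : ℝ) - l'| := by exact_mod_cast hll'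
  set A : ℝ := |(l : ℝ) - l'|
  have hδ : 0 ≤ δ := by positivity
  have hsum : |φ + φ' - (2 * π * (l * D) + 2 * π * (l' * D))| ≤ 4 * π * D := calc
    _ = |(φ - 2 * π * (l * D)) + (φ' - 2 * π * (l' * D))| := by ring_nf
    _ ≤ _ := (abs_add_le _ _).trans (by linarith)
  have hdiff : |φ - φ'| ≤ 2 * π * (2 + A) * D := calc
    _ = |(φ - 2 * π * (l * D)) - (φ' - 2 * π * (l' * D)) + 2 * π * D * (l - l')| := by ring_nf
    _ ≤ |φ - 2 * π * (l * D)| + |φ' - 2 * π * (l' * D)| + 2 * π * D * A := by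
      refine (abs_add_le _ _).trans (add_le_add (abs_sub _ _) (le_of_eq ?_))
      rw [abs_mul, abs_of_nonneg (by positivity)]
    _ ≤ _ := by linarith
  calc |r - 1| + |r' - 1| + |φ + φ' - (2 * π * (l * D) + 2 * π * (l' * D))| * |φ - φ'| / 2
      ≤ 5 / 8 * δ + 5 / 8 * δ + 4 * π * D * (2 * π * (2 + A) * D) / 2 := by gcongr
    _ = (5 / 4 + 4 * π ^ 2 * (2 + A)) * δ := by rw [← Real.sq_sqrt hδ]; ring
    _ ≤ 90 * A * δ := by
      have hπ : π ^ 2 < 10 := by nlinarith [Real.pi_lt_d2, Real.pi_pos]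
      gcongr
      nlinarith [mul_lt_mul_of_pos_right hπ (by linarith : (0:ℝ) < 2 + A)]

end SectArc

/-- For `δ = 2^{-k}` small and `l, l' ∈ I_k` with `|l - l'| > 10³`, the difference set
`Γ_{k,l} - Γ_{k,l'}` is contained in the closed disk of radius `150 δ^{1/2}` centered at
`w(l,l')`, and in the rectangle centered at `w(l,l')` with half-side `100 δ^{1/2}` along
`w(l,l')` and half-side `90 |l-l'| δ` along `i w(l,l')`. -/
theorem sectArc_diff_subset_disk_and_rect :
    ∃ δ₀ : ℝ, 0 < δ₀ ∧ ∀ k : ℕ, (2:ℝ) ^ (-(k:ℤ)) ≤ δ₀ →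
      ∀ l l' : ℤ, l ∈ sectIdx k → l' ∈ sectIdx k → 1000 < |l - l'| →
        (sectArc k l - sectArc k l' ⊆
          Metric.closedBall (sectCenter k l l')
            (150 * Real.sqrt ((2:ℝ) ^ (-(k:ℤ))))) ∧
        (sectArc k l - sectArc k l' ⊆
          {z : ℂ |
            |((z - sectCenter k l l') *
                (starRingEnd ℂ) (sectCenter k l l' / ‖sectCenter k l l'‖)).re| ≤
              100 * Real.sqrt ((2:ℝ) ^ (-(k:ℤ))) ∧
            |((z - sectCenter k l l') *
                (starRingEnd ℂ) (sectCenter k l l' / ‖sectCenter k l l'‖)).im| ≤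
              90 * |l - l'| * (2:ℝ) ^ (-(k:ℤ))}) := by
  refine ⟨1, one_pos, fun k _ l l' _ _ hll' => ⟨fun z hz => ?_, fun z hz => ⟨?_, ?_⟩⟩⟩
  · rw [Metric.mem_closedBall, dist_eq]
    linarith [norm_sub_sectCenter_le hz, Real.sqrt_nonneg ((2:ℝ) ^ (-(k:ℤ)))]
  · refine (abs_re_mul_conj_div_norm_le _ _).trans ?_
    linarith [norm_sub_sectCenter_le hz, Real.sqrt_nonneg ((2:ℝ) ^ (-(k:ℤ)))]
  · exact abs_im_sub_sectCenter_le (by linarith) hz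
end

section
/- Let ψ : ℝ → ℂ be a Schwartz function and let c > 0. There exists a constant C (depending only on ψ and c) such that for every integer m ≥ 1 and every ξ ∈ ℝ² \ {0}, writing ξ' = ξ/|ξ| and L(ξ, m) = { l ∈ ℤ : 0 ≤ l < 2^{m−1}, |⟨e_m^{2l}, ξ'⟩| > c·2^{−m} and |⟨e_m^{2l+1}, ξ'⟩| > c·2^{−m} }, one has Σ_{j∈ℤ} Σ_{l ∈ L(ξ,m)} | ψ̂(2^{j+m} ⟨e_m^{2l+1}, ξ⟩) − ψ̂(2^{j+m} ⟨e_m^{2l}, ξ⟩) |² ≤ C. (This is the uniform multiplier bound \eqref{e:21multi} in the proof of Theorem 3.1.) -/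
open FourierTransform
open scoped ENNReal

/-!
Write `Ψ = 𝓕 ψ` (again a Schwartz function) and `r = 2⁻ᵐ ξ₂`, so that the frequencies of the
`l`-th pair are `A = ξ₁ + 2l r` and `B = A + r`, and membership in `L(ξ, m)` gives
`|A|, |B| > c |r|`. Let `K` bound both the Lipschitz constant of `Ψ` and `x² ‖Ψ x‖`. At the
scale `s = 2^(j+m)` the difference is then at most `K s |r|` and at most `2K / (s M)²`, where
`M = min (|A|, |B|)`. Summing the square of the smaller bound over the dyadic scales gives
`≲ K² (|r| / M)^(4/3)`. Finally `A / r` and `B / r` are distinct integer translates of `ξ₁ / r`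
at distance at least `c` from `0`, so the sum over `l` is at most `4 ∑ₙ (n + c)^(-4/3)`,
whatever `m` and `ξ` are.
-/

namespace SchwartzMap

variable {E F : Type*} [NormedAddCommGroup E] [NormedSpace ℝ E] [NormedAddCommGroup F]
  [NormedSpace ℝ F]

theorem norm_sub_le_seminorm_mul (f : 𝓢(E, F)) (x y : E) :
    ‖f x - f y‖ ≤ SchwartzMap.seminorm ℝ 0 1 f * ‖x - y‖ := by
  have hlip := lipschitzWith_of_nnnorm_fderiv_le
    (C := ⟨SchwartzMap.seminorm ℝ 0 1 f, apply_nonneg _ f⟩) f.differentiable fun z =>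
      NNReal.coe_le_coe.1 ((norm_iteratedFDeriv_one (𝕜 := ℝ) f).symm.trans_le
        (norm_iteratedFDeriv_le_seminorm ℝ f 1 z))
  have := hlip.dist_le_mul x y
  rwa [dist_eq_norm, dist_eq_norm] at this

theorem exists_lipschitz_and_sq_decay (f : 𝓢(ℝ, F)) :
    ∃ K, (∀ x y, ‖f x - f y‖ ≤ K * |x - y|) ∧ ∀ x, x ^ 2 * ‖f x‖ ≤ K := by
  refine ⟨max (SchwartzMap.seminorm ℝ 0 1 f) (SchwartzMap.seminorm ℝ 2 0 f), fun x y => ?_,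
    fun x => ?_⟩
  · calc ‖f x - f y‖ ≤ SchwartzMap.seminorm ℝ 0 1 f * |x - y| :=
          f.norm_sub_le_seminorm_mul x y
      _ ≤ _ := by gcongr; exact le_max_left _ _
  · calc x ^ 2 * ‖f x‖ = ‖x‖ ^ 2 * ‖f x‖ := by rw [Real.norm_eq_abs, sq_abs]
      _ ≤ SchwartzMap.seminorm ℝ 2 0 f := norm_pow_mul_le_seminorm ℝ f 2 x
      _ ≤ _ := le_max_right _ _

end SchwartzMap

section IntegerTranslates

variable {c p : ℝ}

theorem summable_nat_add_rpow_neg (hc : 0 < c) (hp : 1 < p) :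
    Summable fun n : ℕ => ((n : ℝ) + c) ^ (-p) := by
  refine ((Real.summable_one_div_nat_add_rpow c p).2 hp).congr fun n => ?_
  rw [abs_of_pos (by positivity), one_div, Real.rpow_neg (by positivity)]

theorem sum_add_int_rpow_neg_le (hc : 0 < c) (hp : 1 < p) (θ : ℝ) (K : Finset ℤ)
    (hK : ∀ k ∈ K, c ≤ θ + k) :
    ∑ k ∈ K, (θ + k) ^ (-p) ≤ ∑' n : ℕ, ((n : ℝ) + c) ^ (-p) := by
  -- `k ↦ k + ⌊θ - c⌋` sends `K` injectively into `ℕ`, with `θ + k ≥ c + (k + ⌊θ - c⌋)`.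
  set idx : ℤ → ℕ := fun k => (k + ⌊θ - c⌋).toNat
  have hidx : ∀ k ∈ K, ((idx k : ℕ) : ℝ) = k + ⌊θ - c⌋ := fun k hk => by
    have : -(k : ℝ) ≤ θ - c := by linarith [hK k hk]
    have : -k ≤ ⌊θ - c⌋ := Int.le_floor.2 (by exact_mod_cast this)
    exact_mod_cast Int.toNat_of_nonneg (by omega)
  calc ∑ k ∈ K, (θ + k) ^ (-p) ≤ ∑ k ∈ K, ((idx k : ℝ) + c) ^ (-p) := by
        refine Finset.sum_le_sum fun k hk => Real.rpow_le_rpow_of_nonpos (by positivity) ?_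
          (by linarith)
        rw [hidx k hk]
        linarith [Int.floor_le (θ - c)]
    _ = ∑ n ∈ K.image idx, ((n : ℝ) + c) ^ (-p) := by
        refine (Finset.sum_image (f := fun n : ℕ => ((n : ℝ) + c) ^ (-p))
          fun k hk l hl h => ?_).symm
        have := congrArg (fun n : ℕ => (n : ℝ)) h
        simp only [hidx k hk, hidx l hl, add_left_inj, Int.cast_inj] at this
        exact this
    _ ≤ ∑' n : ℕ, ((n : ℝ) + c) ^ (-p) :=
        (summable_nat_add_rpow_neg hc hp).sum_le_tsum _ fun n _ => by positivity

theorem sum_abs_add_int_rpow_neg_le (hc : 0 < c) (hp : 1 < p) (θ : ℝ) (K : Finset ℤ)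
    (hK : ∀ k ∈ K, c ≤ |θ + k|) :
    ∑ k ∈ K, |θ + k| ^ (-p) ≤ 2 * ∑' n : ℕ, ((n : ℝ) + c) ^ (-p) := by
  rw [← Finset.sum_filter_add_sum_filter_not K fun k : ℤ => 0 ≤ θ + k, two_mul]
  set neg := K.filter fun k : ℤ => ¬0 ≤ θ + k
  gcongr
  · rw [Finset.sum_congr rfl fun k hk => by rw [abs_of_nonneg (Finset.mem_filter.1 hk).2]]
    refine sum_add_int_rpow_neg_le hc hp θ _ fun k hk => ?_
    simpa [abs_of_nonneg (Finset.mem_filter.1 hk).2] using hK k (Finset.mem_filter.1 hk).1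
  · have hneg : ∀ k ∈ neg, |θ + k| = -θ + ((-k : ℤ) : ℝ) := fun k hk => by
      rw [abs_of_neg (not_le.1 (Finset.mem_filter.1 hk).2)]
      push_cast
      ring
    have := sum_add_int_rpow_neg_le hc hp (-θ) (neg.image Neg.neg) fun k hk => by
      obtain ⟨k', hk', rfl⟩ := Finset.mem_image.1 hk
      rw [← hneg k' hk']
      exact hK k' (Finset.mem_filter.1 hk').1
    rw [Finset.sum_congr rfl fun k hk => by rw [hneg k hk]]
    rwa [Finset.sum_image fun _ _ _ _ => neg_inj.1] at this

theorem rpow_div_abs_add_mul_eq {r : ℝ} (hr : r ≠ 0) (x k : ℝ) :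
    (|r| / |x + k * r|) ^ p = |x / r + k| ^ (-p) := by
  rw [show x + k * r = r * (x / r + k) by field_simp, abs_mul, div_mul_cancel_left₀
    (abs_ne_zero.2 hr), Real.inv_rpow (abs_nonneg _), Real.rpow_neg (abs_nonneg _)]

theorem sum_rpow_div_min_abs_le (hc : 0 < c) (hp : 1 < p) (x r : ℝ) (L : Finset ℤ)
    (hL : ∀ l ∈ L, c * |r| < |x + 2 * l * r| ∧ c * |r| < |x + (2 * l + 1) * r|) :
    ∑ l ∈ L, (|r| / min |x + 2 * l * r| |x + (2 * l + 1) * r|) ^ p ≤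
      4 * ∑' n : ℕ, ((n : ℝ) + c) ^ (-p) := by
  have hT : 0 ≤ ∑' n : ℕ, ((n : ℝ) + c) ^ (-p) := tsum_nonneg fun n => by positivity
  rcases eq_or_ne r 0 with rfl | hr
  · simp [Real.zero_rpow (by linarith : p ≠ 0), hT]
  -- Both points of the pair are integer translates of `x / r`, at least `c` away from `0`.
  have hsep : ∀ k : ℝ, c * |r| < |x + k * r| → c ≤ |x / r + k| := fun k hk => by
    have : c * |r| < |r| * |x / r + k| := by
      rwa [← abs_mul, mul_add, mul_div_cancel₀ _ hr, mul_comm r]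
    exact (lt_of_mul_lt_mul_left (by rwa [mul_comm] at this) (abs_nonneg r)).le
  have hpair : ∀ l ∈ L, (|r| / min |x + 2 * l * r| |x + (2 * l + 1) * r|) ^ p ≤
      |x / r + ((2 * l : ℤ) : ℝ)| ^ (-p) + |x / r + ((2 * l + 1 : ℤ) : ℝ)| ^ (-p) := fun l _ => by
    push_cast
    rw [← rpow_div_abs_add_mul_eq hr, ← rpow_div_abs_add_mul_eq hr]
    rcases min_choice |x + 2 * l * r| |x + (2 * l + 1) * r| with h | h <;> rw [h]
    · exact le_add_of_nonneg_right (by positivity)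
    · exact le_add_of_nonneg_left (by positivity)
  have hsum : ∀ g : ℤ → ℤ, g.Injective → (∀ l ∈ L, c ≤ |x / r + g l|) →
      ∑ l ∈ L, |x / r + g l| ^ (-p) ≤ 2 * ∑' n : ℕ, ((n : ℝ) + c) ^ (-p) := fun g hg hgL => by
    rw [← Finset.sum_image (f := fun k : ℤ => |x / r + k| ^ (-p)) fun _ _ _ _ h => hg h]
    refine sum_abs_add_int_rpow_neg_le hc hp _ _ fun k hk => ?_
    obtain ⟨l, hl, rfl⟩ := Finset.mem_image.1 hk
    exact hgL l hl
  calc _ ≤ ∑ l ∈ L, (|x / r + ((2 * l : ℤ) : ℝ)| ^ (-p) + |x / r + ((2 * l + 1 : ℤ) : ℝ)| ^ (-p)) :=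
        Finset.sum_le_sum hpair
    _ ≤ 2 * ∑' n : ℕ, ((n : ℝ) + c) ^ (-p) + 2 * ∑' n : ℕ, ((n : ℝ) + c) ^ (-p) := by
        rw [Finset.sum_add_distrib]
        gcongr
        · exact hsum (2 * ·) (fun _ _ h => by simpa using h) fun l hl =>
            hsep _ (by push_cast; exact (hL l hl).1)
        · exact hsum (2 * · + 1) (fun _ _ h => by simpa using h) fun l hl =>
            hsep _ (by push_cast; exact (hL l hl).2)
    _ = 4 * ∑' n : ℕ, ((n : ℝ) + c) ^ (-p) := by ring

end IntegerTranslates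

theorem sum_zpow_mul_le {q t : ℝ} (hq : 1 < q) (G : Finset ℤ)
    (hG : ∀ j ∈ G, q ^ j * t ≤ 1) : ∑ j ∈ G, q ^ j * t ≤ q / (q - 1) := by
  rcases G.eq_empty_or_nonempty with rfl | hne
  · simp only [Finset.sum_empty]
    exact div_nonneg (by linarith) (by linarith)
  set j₀ := G.max' hne
  set idx : ℤ → ℕ := fun j => (j₀ - j).toNat
  have hidx : ∀ j ∈ G, j₀ = j + idx j := fun j hj => by
    have := G.le_max' j hj
    simp only [idx]
    omega
  have hq₀ : q ≠ 0 := by positivity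
  have hterm : ∀ j ∈ G, q ^ j * t = q ^ j₀ * t * q⁻¹ ^ idx j := fun j hj => by
    rw [hidx j hj, zpow_add₀ hq₀, zpow_natCast, inv_pow]
    field_simp
  have hgeom : ∑ n ∈ G.image idx, q⁻¹ ^ n ≤ q / (q - 1) := by
    have h0 : 0 ≤ q⁻¹ := by positivity
    have h1 : q⁻¹ < 1 := inv_lt_one_of_one_lt₀ hq
    calc ∑ n ∈ G.image idx, q⁻¹ ^ n ≤ ∑' n : ℕ, q⁻¹ ^ n :=
          (summable_geometric_of_lt_one h0 h1).sum_le_tsum _ fun n _ => by positivity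
      _ = q / (q - 1) := by
          rw [tsum_geometric_of_lt_one h0 h1]
          field_simp
  rw [Finset.sum_congr rfl hterm, ← Finset.mul_sum,
    ← Finset.sum_image fun j hj k hk h => by
      linarith [hidx j hj, hidx k hk, congrArg (Nat.cast : ℕ → ℤ) h]]
  calc q ^ j₀ * t * ∑ n ∈ G.image idx, q⁻¹ ^ n
      ≤ 1 * (q / (q - 1)) :=
        mul_le_mul (hG j₀ (G.max'_mem hne)) hgeom (Finset.sum_nonneg fun n _ => by positivity)
          zero_le_one
    _ = q / (q - 1) := one_mul _

theorem two_zpow_mul_sq (j : ℤ) (t : ℝ) : (2 ^ j * t) ^ 2 = 4 ^ j * t ^ 2 := by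
  rw [mul_pow, ← zpow_natCast ((2 : ℝ) ^ j) 2, ← zpow_mul, mul_comm j, zpow_mul]
  norm_num

theorem sum_sq_min_two_zpow_mul_le {t : ℝ} (ht : 0 < t) (F : Finset ℤ) :
    ∑ j ∈ F, min (2 ^ j * t) ((2 ^ j * t) ^ 2)⁻¹ ^ 2 ≤ 8 / 3 := by
  have hinv : ∀ j : ℤ, 4 ^ (-j) * t⁻¹ ^ 2 = ((2 ^ j * t) ^ 2)⁻¹ := fun j => by
    rw [two_zpow_mul_sq, zpow_neg, inv_pow, mul_inv]
  have hsmall : ∀ j : ℤ, min (2 ^ j * t) ((2 ^ j * t) ^ 2)⁻¹ ^ 2 ≤ 4 ^ j * t ^ 2 := fun j => by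
    rw [← two_zpow_mul_sq]
    gcongr
    exact min_le_left _ _
  -- Above scale one, `y = 2 ^ j * t` has `y⁻⁴ ≤ y⁻² = (2 ^ (-j) * t⁻¹) ^ 2`.
  have hlarge : ∀ j : ℤ, 1 ≤ 2 ^ j * t →
      min (2 ^ j * t) ((2 ^ j * t) ^ 2)⁻¹ ^ 2 ≤ 4 ^ (-j) * t⁻¹ ^ 2 := fun j hj => by
    rw [hinv]
    calc min (2 ^ j * t) ((2 ^ j * t) ^ 2)⁻¹ ^ 2 ≤ ((2 ^ j * t) ^ 2)⁻¹ ^ 2 := by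
          gcongr
          exact min_le_right _ _
      _ ≤ ((2 ^ j * t) ^ 2)⁻¹ :=
          pow_le_of_le_one (by positivity) (inv_le_one_of_one_le₀ (one_le_pow₀ hj)) two_ne_zero
  set below := F.filter fun j : ℤ => 2 ^ j * t ≤ 1
  set above := F.filter fun j : ℤ => ¬2 ^ j * t ≤ 1
  rw [← Finset.sum_filter_add_sum_filter_not F fun j : ℤ => 2 ^ j * t ≤ 1]
  calc _ ≤ ∑ j ∈ below, 4 ^ j * t ^ 2 + ∑ k ∈ above.image Neg.neg, 4 ^ k * t⁻¹ ^ 2 := by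
        rw [Finset.sum_image fun _ _ _ _ => neg_inj.1]
        gcongr with j hj j hj
        · exact hsmall j
        · exact hlarge j (not_le.1 (Finset.mem_filter.1 hj).2).le
    _ ≤ 4 / (4 - 1) + 4 / (4 - 1) := by
        refine add_le_add (sum_zpow_mul_le (by norm_num) _ fun j hj => ?_)
          (sum_zpow_mul_le (by norm_num) _ fun k hk => ?_)
        · rw [← two_zpow_mul_sq]
          exact pow_le_one₀ (by positivity) (Finset.mem_filter.1 hj).2
        · obtain ⟨j, hj, rfl⟩ := Finset.mem_image.1 hk
          rw [hinv]
          exact inv_le_one_of_one_le₀ (one_le_pow₀ (not_le.1 (Finset.mem_filter.1 hj).2).le)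
    _ = 8 / 3 := by norm_num

section DyadicDifferences

variable {E : Type*} [SeminormedAddCommGroup E] {Ψ : ℝ → E} {K M a b : ℝ}

theorem norm_le_div_sq_of_sq_mul_norm_le (hdecay : ∀ x, x ^ 2 * ‖Ψ x‖ ≤ K) (hM : 0 < M)
    {x : ℝ} (hx : M ≤ |x|) : ‖Ψ x‖ ≤ K / M ^ 2 := by
  rw [le_div_iff₀ (by positivity), mul_comm]
  calc M ^ 2 * ‖Ψ x‖ ≤ |x| ^ 2 * ‖Ψ x‖ := by gcongr
    _ = x ^ 2 * ‖Ψ x‖ := by rw [sq_abs]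
    _ ≤ K := hdecay x

theorem norm_sub_mul_le_min (hlip : ∀ x y, ‖Ψ x - Ψ y‖ ≤ K * |x - y|)
    (hdecay : ∀ x, x ^ 2 * ‖Ψ x‖ ≤ K) (hM : 0 < M) (ha : M ≤ |a|) (hb : M ≤ |b|) {s : ℝ}
    (hs : 0 < s) : ‖Ψ (s * b) - Ψ (s * a)‖ ≤ min (K * (s * |b - a|)) (2 * K / (s * M) ^ 2) := by
  have hscaled : ∀ {x}, M ≤ |x| → ‖Ψ (s * x)‖ ≤ K / (s * M) ^ 2 := fun hx =>
    norm_le_div_sq_of_sq_mul_norm_le hdecay (by positivity) <| by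
      rw [abs_mul, abs_of_pos hs]
      gcongr
  refine le_min ?_ ?_
  · calc ‖Ψ (s * b) - Ψ (s * a)‖ ≤ K * |s * b - s * a| := hlip _ _
      _ = K * (s * |b - a|) := by rw [← mul_sub, abs_mul, abs_of_pos hs]
  · calc ‖Ψ (s * b) - Ψ (s * a)‖ ≤ ‖Ψ (s * b)‖ + ‖Ψ (s * a)‖ := norm_sub_le _ _
      _ ≤ K / (s * M) ^ 2 + K / (s * M) ^ 2 := add_le_add (hscaled hb) (hscaled ha)
      _ = 2 * K / (s * M) ^ 2 := by ring

theorem sum_sq_norm_sub_two_zpow_mul_le (hlip : ∀ x y, ‖Ψ x - Ψ y‖ ≤ K * |x - y|)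
    (hdecay : ∀ x, x ^ 2 * ‖Ψ x‖ ≤ K) (hM : 0 < M) (ha : M ≤ |a|) (hb : M ≤ |b|)
    (F : Finset ℤ) :
    ∑ j ∈ F, ‖Ψ (2 ^ j * b) - Ψ (2 ^ j * a)‖ ^ 2 ≤
      32 / 3 * K ^ 2 * (|b - a| / M) ^ (4 / 3 : ℝ) := by
  have hK : 0 ≤ K := by simpa using hdecay 0
  rcases eq_or_ne b a with rfl | hba
  · simp
  -- Rescale by `τ = (|b - a| / M) ^ (1/3)`, which balances the two bounds of `norm_sub_mul_le_min`.
  set τ := (|b - a| / M) ^ (1 / 3 : ℝ)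
  have hρ : 0 < |b - a| / M := div_pos (abs_pos.2 (sub_ne_zero.2 hba)) hM
  have hτ : 0 < τ := Real.rpow_pos_of_pos hρ _
  have hτ3 : τ ^ 3 = |b - a| / M := by
    rw [← Real.rpow_natCast, ← Real.rpow_mul hρ.le]
    norm_num
  have hτ4 : (|b - a| / M) ^ (4 / 3 : ℝ) = τ ^ 4 := by
    rw [← Real.rpow_natCast, ← Real.rpow_mul hρ.le]
    norm_num
  have hterm : ∀ j : ℤ, ‖Ψ (2 ^ j * b) - Ψ (2 ^ j * a)‖ ^ 2 ≤
      (2 * K * τ ^ 2) ^ 2 * min (2 ^ j * (M * τ)) ((2 ^ j * (M * τ)) ^ 2)⁻¹ ^ 2 := fun j => by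
    have hs : (0 : ℝ) < 2 ^ j := by positivity
    rw [← mul_pow, mul_min_of_nonneg _ _ (by positivity)]
    gcongr
    refine (norm_sub_mul_le_min hlip hdecay hM ha hb hs).trans (min_le_min ?_ (le_of_eq ?_))
    · have : |b - a| = τ ^ 3 * M := by rw [hτ3]; field_simp
      rw [this, show 2 * K * τ ^ 2 * (2 ^ j * (M * τ)) = 2 * (K * (2 ^ j * (τ ^ 3 * M))) by ring]
      linarith [show 0 ≤ K * (2 ^ j * (τ ^ 3 * M)) by positivity]
    · field_simp
  calc ∑ j ∈ F, ‖Ψ (2 ^ j * b) - Ψ (2 ^ j * a)‖ ^ 2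
      ≤ (2 * K * τ ^ 2) ^ 2 * ∑ j ∈ F, min (2 ^ j * (M * τ)) ((2 ^ j * (M * τ)) ^ 2)⁻¹ ^ 2 := by
        rw [Finset.mul_sum]
        exact Finset.sum_le_sum fun j _ => hterm j
    _ ≤ (2 * K * τ ^ 2) ^ 2 * (8 / 3) := by
        gcongr
        exact sum_sq_min_two_zpow_mul_le (by positivity) F
    _ = 32 / 3 * K ^ 2 * (|b - a| / M) ^ (4 / 3 : ℝ) := by
        rw [hτ4]
        ring

theorem sum_sq_norm_sub_le_of_separated {c : ℝ} (hlip : ∀ x y, ‖Ψ x - Ψ y‖ ≤ K * |x - y|)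
    (hdecay : ∀ x, x ^ 2 * ‖Ψ x‖ ≤ K) (hc : 0 < c) (x r : ℝ) (L : Finset ℤ)
    (hL : ∀ l ∈ L, c * |r| < |x + 2 * l * r| ∧ c * |r| < |x + (2 * l + 1) * r|) (J : Finset ℤ) :
    ∑ j ∈ J, ∑ l ∈ L, ‖Ψ (2 ^ j * (x + (2 * l + 1) * r)) - Ψ (2 ^ j * (x + 2 * l * r))‖ ^ 2 ≤
      128 / 3 * K ^ 2 * ∑' n : ℕ, ((n : ℝ) + c) ^ (-(4 / 3 : ℝ)) := by
  rw [Finset.sum_comm]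
  calc _ ≤ ∑ l ∈ L, 32 / 3 * K ^ 2 *
          (|r| / min |x + 2 * l * r| |x + (2 * l + 1) * r|) ^ (4 / 3 : ℝ) :=
        Finset.sum_le_sum fun l hl => by
          have hM : 0 < min |x + 2 * l * r| |x + (2 * l + 1) * r| :=
            lt_min ((by positivity : 0 ≤ c * |r|).trans_lt (hL l hl).1)
              ((by positivity : 0 ≤ c * |r|).trans_lt (hL l hl).2)
          have := sum_sq_norm_sub_two_zpow_mul_le hlip hdecay hM (min_le_left _ _)
            (min_le_right _ _) J
          rwa [show x + (2 * l + 1) * r - (x + 2 * l * r) = r by ring] at this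
    _ ≤ 32 / 3 * K ^ 2 * (4 * ∑' n : ℕ, ((n : ℝ) + c) ^ (-(4 / 3 : ℝ))) := by
        rw [← Finset.mul_sum]
        gcongr
        exact sum_rpow_div_min_abs_le hc (by norm_num) x r L hL
    _ = 128 / 3 * K ^ 2 * ∑' n : ℕ, ((n : ℝ) + c) ^ (-(4 / 3 : ℝ)) := by ring

end DyadicDifferences

theorem mul_abs_lt_abs_inv_mul_add_mul {c s t : ℝ} (hc : 0 ≤ c) (hs : 0 < s) (ξ : ℝ × ℝ)
    (h : c * s < |ξ.1 / √(ξ.1 ^ 2 + ξ.2 ^ 2) + t * s * (ξ.2 / √(ξ.1 ^ 2 + ξ.2 ^ 2))|) :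
    c * |ξ.2| < |s⁻¹ * ξ.1 + t * ξ.2| := by
  set n := √(ξ.1 ^ 2 + ξ.2 ^ 2)
  rw [show ξ.1 / n + t * s * (ξ.2 / n) = s * (s⁻¹ * ξ.1 + t * ξ.2) / n by field_simp, abs_div,
    abs_mul, abs_of_pos hs, abs_of_nonneg (Real.sqrt_nonneg _)] at h
  have hn : 0 < n := by
    rcases (Real.sqrt_nonneg (ξ.1 ^ 2 + ξ.2 ^ 2)).eq_or_lt with h0 | h0
    · rw [← h0, div_zero] at h
      exact absurd h (not_lt.2 (by positivity))
    · exact h0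
  have hξ₂ : |ξ.2| ≤ n := Real.abs_le_sqrt (by nlinarith)
  rw [lt_div_iff₀ hn] at h
  refine lt_of_mul_lt_mul_left ?_ hs.le
  calc s * (c * |ξ.2|) = c * s * |ξ.2| := by ring
    _ ≤ c * s * n := by gcongr
    _ < s * |s⁻¹ * ξ.1 + t * ξ.2| := h

theorem tsum_sum_sq_enorm_le_ofReal {ι κ E : Type*} [SeminormedAddCommGroup E]
    (f : ι → κ → E) (L : Finset κ) {C : ℝ}
    (h : ∀ J : Finset ι, ∑ j ∈ J, ∑ l ∈ L, ‖f j l‖ ^ 2 ≤ C) :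
    ∑' j, ∑ l ∈ L, (‖f j l‖₊ : ℝ≥0∞) ^ 2 ≤ ENNReal.ofReal C := by
  refine ENNReal.summable.tsum_le_of_sum_le fun J => ?_
  have hsq : ∀ z : E, (‖z‖₊ : ℝ≥0∞) ^ 2 = ENNReal.ofReal (‖z‖ ^ 2) := fun z => by
    rw [ENNReal.ofReal_pow (norm_nonneg _), ofReal_norm, enorm_eq_nnnorm]
  simp_rw [hsq, ← ENNReal.ofReal_sum_of_nonneg fun _ _ => sq_nonneg _,
    ← ENNReal.ofReal_sum_of_nonneg fun _ _ => Finset.sum_nonneg fun _ _ => sq_nonneg _]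
  exact ENNReal.ofReal_le_ofReal (h J)

/-- Uniform multiplier bound: for a Schwartz function `ψ` on `ℝ` and `c > 0`, the sum
`Σ_{j∈ℤ} Σ_{l∈L(ξ,m)} |ψ̂(2^{j+m}⟨e_m^{2l+1},ξ⟩) - ψ̂(2^{j+m}⟨e_m^{2l},ξ⟩)|²` is bounded
uniformly in `m ≥ 1` and `ξ ≠ 0`, where `e_m^l = (1, l 2^{-m})` and `L(ξ,m)` consists of
those `0 ≤ l < 2^{m-1}` with `|⟨e_m^{2l},ξ'⟩| > c 2^{-m}` and `|⟨e_m^{2l+1},ξ'⟩| > c 2^{-m}`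
for `ξ' = ξ/|ξ|`. -/
theorem multiplier_uniform_bound :
    ∀ (ψ : SchwartzMap ℝ ℂ) (c : ℝ), 0 < c →
    ∃ C : ℝ, 0 < C ∧ ∀ m : ℕ, 1 ≤ m → ∀ ξ : ℝ × ℝ, ξ ≠ 0 →
      (∑' j : ℤ, ∑ l ∈ (Finset.Ico (0:ℤ) (2 ^ (m - 1))).filter (fun l : ℤ =>
          c * (2:ℝ) ^ (-(m:ℤ)) <
            |ξ.1 / Real.sqrt (ξ.1 ^ 2 + ξ.2 ^ 2) +
              2 * (l:ℝ) * (2:ℝ) ^ (-(m:ℤ)) * (ξ.2 / Real.sqrt (ξ.1 ^ 2 + ξ.2 ^ 2))| ∧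
          c * (2:ℝ) ^ (-(m:ℤ)) <
            |ξ.1 / Real.sqrt (ξ.1 ^ 2 + ξ.2 ^ 2) +
              (2 * (l:ℝ) + 1) * (2:ℝ) ^ (-(m:ℤ)) * (ξ.2 / Real.sqrt (ξ.1 ^ 2 + ξ.2 ^ 2))|),
        (‖𝓕 (⇑ψ) ((2:ℝ) ^ ((j : ℤ) + (m : ℤ)) *
              (ξ.1 + (2 * (l:ℝ) + 1) * (2:ℝ) ^ (-(m:ℤ)) * ξ.2)) -
            𝓕 (⇑ψ) ((2:ℝ) ^ ((j : ℤ) + (m : ℤ)) *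
              (ξ.1 + 2 * (l:ℝ) * (2:ℝ) ^ (-(m:ℤ)) * ξ.2))‖₊ : ℝ≥0∞) ^ 2) ≤
        ENNReal.ofReal C := by
  intro ψ c hc
  obtain ⟨K, hlip, hdecay⟩ := (𝓕 ψ).exists_lipschitz_and_sq_decay
  refine ⟨128 / 3 * K ^ 2 * ∑' n : ℕ, ((n : ℝ) + c) ^ (-(4 / 3 : ℝ)) + 1, by positivity,
    fun m _ ξ _ => tsum_sum_sq_enorm_le_ofReal _ _ fun J => ?_⟩
  -- Rescaling by `2 ^ m` turns the step `2 ^ (-m) * ξ.2` of the progression into `ξ.2`.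
  have hscale : ∀ (j : ℤ) (t : ℝ), (2 : ℝ) ^ (j + m) * (ξ.1 + t * 2 ^ (-(m : ℤ)) * ξ.2) =
      2 ^ j * ((2 ^ (-(m : ℤ)))⁻¹ * ξ.1 + t * ξ.2) := fun j t => by
    rw [zpow_add₀ two_ne_zero, zpow_neg, inv_inv]
    field_simp
  simp only [hscale, ← SchwartzMap.fourier_coe]
  refine (sum_sq_norm_sub_le_of_separated hlip hdecay hc _ ξ.2 _ (fun l hl => ?_) J).trans
    (le_add_of_nonneg_right zero_le_one)
  obtain ⟨hA, hB⟩ := (Finset.mem_filter.1 hl).2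
  exact ⟨mul_abs_lt_abs_inv_mul_add_mul hc.le (by positivity) ξ hA,
    mul_abs_lt_abs_inv_mul_add_mul hc.le (by positivity) ξ hB⟩
end
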